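/- Let B be a labeled abstract rewrite system and ≺ a transitive, well-founded relation on its labels. If every local peak of B is decreasing, then every peak of B is decreasing. -/

import Mathlib

/-!
Induct on the measure `|τ| + |σ|` of the peak, ordered by the multiset extension of `≺`, which
is well founded since it is contained in the transitive closure of `Relation.CutExpand`.
For `τ = l :: τ₁` and `σ = k :: σ₁`, close the local peak of `l` and `k`, then the peak of `τ₁`
against the left closing sequence, then the peak of `σ₁` against the right side built so far.
Both inner peaks are smaller, because the lexicographic maximum measure discards whatever lies
below the first label. The three diagrams paste into one, since decreasingness survives
horizontal and vertical pasting; this rests on `|σ ++ τ| = |σ| + (|τ| -s ds σ)` and, for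
transitive `≺`, on `ds σ = ds |σ|`.
-/

open Relation

universe u v

variable {α : Type u} {β : Type v}

/-- down-set of a set of labels -/
def ds (r : β → β → Prop) (S : Set β) : Set β := {b | ∃ a ∈ S, r b a}

/-- down-set of a multiset of labels -/
def dm (r : β → β → Prop) (M : Multiset β) : Set β := ds r {a | a ∈ M}

/-- down-set of a list of labels -/
def dl (r : β → β → Prop) (σ : List β) : Set β := ds r {a | a ∈ σ}

/-- `M -s S`: remove from the multiset `M` all occurrences of elements of the set `S` -/
noncomputable def msub (M : Multiset β) (S : Set β) : Multiset β :=
  @Multiset.filter β (fun a => a ∉ S) (Classical.decPred _) M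

/-- `M ≼_mul N` -/
def mulLe (r : β → β → Prop) (M N : Multiset β) : Prop :=
  ∃ I J K : Multiset β, M = I + K ∧ N = I + J ∧ ∀ k ∈ K, k ∈ dm r J

/-- `M ≺_mul N`: the multiset extension of `r` -/
def mulLt (r : β → β → Prop) (M N : Multiset β) : Prop :=
  ∃ I J K : Multiset β, M = I + K ∧ N = I + J ∧ (∀ k ∈ K, k ∈ dm r J) ∧ J ≠ 0

/-- the one-step multiset extension of `r` -/
def mult1 (r : β → β → Prop) (M N : Multiset β) : Prop :=
  ∃ (a : β) (I K : Multiset β), M = I + K ∧ N = I + {a} ∧ ∀ b ∈ K, r b a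

/-- the lexicographic maximum measure `|σ|` -/
noncomputable def lexmax (r : β → β → Prop) : List β → Multiset β
  | [] => 0
  | a :: σ => {a} + msub (lexmax r σ) (ds r {a})

/-- the quadruple of label lists `(τ, σ, σ', τ')` is decreasing -/
def Decreasing (r : β → β → Prop) (τ σ σ' τ' : List β) : Prop :=
  mulLe r (lexmax r (σ ++ τ')) (lexmax r τ + lexmax r σ) ∧
  mulLe r (lexmax r (τ ++ σ')) (lexmax r τ + lexmax r σ)

/-- labeled rewrite sequences of the labeled ARS `B` -/
inductive LSeq (B : α → β → α → Prop) : α → List β → α → Prop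
  | nil (a : α) : LSeq B a [] a
  | cons {a b c : α} {l : β} {σ : List β} :
      B a l b → LSeq B b σ c → LSeq B a (l :: σ) c

/-- labeled conversions of the labeled ARS `B` -/
inductive Conv (B : α → β → α → Prop) : α → List β → α → Prop
  | nil (a : α) : Conv B a [] a
  | fwd {a b c : α} {l : β} {σ : List β} :
      B a l b → Conv B b σ c → Conv B a (l :: σ) c
  | bwd {a b c : α} {l : β} {σ : List β} :
      B b l a → Conv B b σ c → Conv B a (l :: σ) c

/-- the local peak `b ←lb a →lc c` is decreasing with respect to conversions -/
def LDConv (B : α → β → α → Prop) (r : β → β → Prop) (b c : α) (lb lc : β) : Prop :=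
  ∃ (d b1 b2 c1 c2 : α) (σ1 σ3 τ1 τ3 : List β),
    Conv B b σ1 b1 ∧ (∀ l ∈ σ1, l ∈ ds r ({lc} : Set β)) ∧
    (b1 = b2 ∨ B b1 lb b2) ∧
    Conv B b2 σ3 d ∧ (∀ l ∈ σ3, l ∈ ds r ({lc, lb} : Set β)) ∧
    Conv B c τ1 c1 ∧ (∀ l ∈ τ1, l ∈ ds r ({lb} : Set β)) ∧
    (c1 = c2 ∨ B c1 lc c2) ∧
    Conv B c2 τ3 d ∧ (∀ l ∈ τ3, l ∈ ds r ({lc, lb} : Set β))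

/-- confluence of an abstract rewrite system -/
def Confluent (A : α → α → Prop) : Prop :=
  ∀ a b c : α, ReflTransGen A a b → ReflTransGen A a c →
    ∃ d, ReflTransGen A b d ∧ ReflTransGen A c d

def DownClosed (r : β → β → Prop) (S : Set β) : Prop := ∀ ⦃x y⦄, r x y → y ∈ S → x ∈ S

section Measure

variable {r : β → β → Prop}

lemma mem_ds_singleton {a x : β} : x ∈ ds r {a} ↔ r x a := by
  simp [ds]

lemma ds_union (S T : Set β) : ds r (S ∪ T) = ds r S ∪ ds r T := by
  ext x
  simp only [ds, Set.mem_union, Set.mem_ofPred_eq, or_and_right, exists_or]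

lemma downClosed_ds [IsTrans β r] (S : Set β) : DownClosed r (ds r S) :=
  fun _ _ hxy ⟨z, hz, hyz⟩ => ⟨z, hz, trans_of r hxy hyz⟩

lemma dl_nil : dl r ([] : List β) = ∅ := by
  simp [dl, ds]

lemma dl_singleton (a : β) : dl r [a] = ds r {a} := by
  simp only [dl, List.mem_singleton, Set.ofPred_eq_eq_singleton]

lemma dl_append (σ τ : List β) : dl r (σ ++ τ) = dl r σ ∪ dl r τ := by
  simp only [dl, List.mem_append, Set.ofPred_or, ds_union]

lemma dl_cons (a : β) (σ : List β) : dl r (a :: σ) = ds r {a} ∪ dl r σ := by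
  rw [← List.singleton_append, dl_append, dl_singleton]

lemma dm_zero : dm r (0 : Multiset β) = ∅ := by
  simp [dm, ds]

lemma dm_add (M N : Multiset β) : dm r (M + N) = dm r M ∪ dm r N := by
  simp only [dm, Multiset.mem_add, Set.ofPred_or, ds_union]

lemma dm_singleton (a : β) : dm r {a} = ds r {a} := by
  simp only [dm, Multiset.mem_singleton, Set.ofPred_eq_eq_singleton]

lemma msub_eq_filter (M : Multiset β) (S : Set β) [DecidablePred (· ∈ S)] :
    msub M S = M.filter (· ∉ S) := by
  unfold msub
  congr

lemma mem_msub {M : Multiset β} {S : Set β} {x : β} : x ∈ msub M S ↔ x ∈ M ∧ x ∉ S := by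
  classical
  rw [msub_eq_filter, Multiset.mem_filter]

lemma msub_zero (S : Set β) : msub (0 : Multiset β) S = 0 := rfl

lemma msub_empty (M : Multiset β) : msub M ∅ = M := by
  classical
  rw [msub_eq_filter, Multiset.filter_eq_self]
  exact fun a _ => Set.notMem_empty a

lemma msub_le (M : Multiset β) (S : Set β) : msub M S ≤ M := by
  classical
  rw [msub_eq_filter]
  exact Multiset.filter_le _ M

lemma msub_add (M N : Multiset β) (S : Set β) : msub (M + N) S = msub M S + msub N S := by
  classical
  simp only [msub_eq_filter, Multiset.filter_add]

lemma msub_msub (M : Multiset β) (S T : Set β) : msub (msub M S) T = msub M (S ∪ T) := by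
  classical
  simp only [msub_eq_filter, Multiset.filter_filter, Set.mem_union, not_or, and_comm]

lemma msub_union_le (M : Multiset β) (S T : Set β) : msub M (S ∪ T) ≤ msub M T := by
  rw [Set.union_comm, ← msub_msub]
  exact msub_le _ _

lemma exists_eq_msub_add (M : Multiset β) (S : Set β) :
    ∃ Q, M = msub M S + Q ∧ ∀ x ∈ Q, x ∈ S := by
  classical
  refine ⟨M.filter (· ∈ S), ?_, fun x hx => (Multiset.mem_filter.1 hx).2⟩
  rw [msub_eq_filter, add_comm, Multiset.filter_add_not]

lemma exists_msub_eq_msub_union_add (M : Multiset β) (S T : Set β) :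
    ∃ R, msub M S = msub M (S ∪ T) + R ∧ ∀ x ∈ R, x ∈ T ∧ x ∉ S := by
  obtain ⟨R, hR, hRT⟩ := exists_eq_msub_add (msub M S) T
  rw [msub_msub] at hR
  refine ⟨R, hR, fun x hx => ⟨hRT x hx, ?_⟩⟩
  have hxS : x ∈ msub M S := hR ▸ Multiset.mem_add.2 (Or.inr hx)
  exact (mem_msub.1 hxS).2

lemma union_dm_msub {S : Set β} (hS : DownClosed r S) (M : Multiset β) :
    S ∪ dm r (msub M S) = S ∪ dm r M := by
  ext x
  simp only [Set.mem_union, dm, ds, Set.mem_ofPred_eq, mem_msub]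
  constructor
  · rintro (hx | ⟨y, ⟨hy, -⟩, hxy⟩)
    exacts [Or.inl hx, Or.inr ⟨y, hy, hxy⟩]
  · rintro (hx | ⟨y, hy, hxy⟩)
    · exact Or.inl hx
    · by_cases hyS : y ∈ S
      exacts [Or.inl (hS hxy hyS), Or.inr ⟨y, ⟨hy, hyS⟩, hxy⟩]

lemma lexmax_cons (a : β) (σ : List β) :
    lexmax r (a :: σ) = {a} + msub (lexmax r σ) (ds r {a}) := rfl

lemma lexmax_singleton (a : β) : lexmax r [a] = {a} := by
  rw [lexmax_cons, lexmax, msub_zero, add_zero]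

lemma lexmax_singleton_le_cons (a : β) (σ : List β) : lexmax r [a] ≤ lexmax r (a :: σ) := by
  rw [lexmax_singleton, lexmax_cons]
  exact le_self_add

lemma lexmax_append (σ τ : List β) :
    lexmax r (σ ++ τ) = lexmax r σ + msub (lexmax r τ) (dl r σ) := by
  induction σ with
  | nil => rw [List.nil_append, dl_nil, msub_empty, lexmax, zero_add]
  | cons a σ ih =>
    rw [List.cons_append, lexmax_cons, ih, msub_add, msub_msub, lexmax_cons, add_assoc,
      dl_cons, Set.union_comm]

lemma dl_eq_dm_lexmax [IsTrans β r] (σ : List β) : dl r σ = dm r (lexmax r σ) := by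
  induction σ with
  | nil => rw [dl_nil, lexmax, dm_zero]
  | cons a σ ih =>
    rw [dl_cons, lexmax_cons, dm_add, dm_singleton, union_dm_msub (downClosed_ds _), ← ih]

end Measure

lemma Multiset.exists_refinement_of_add_eq_add {X Y Z W : Multiset β} (h : X + Y = Z + W) :
    ∃ U V S T : Multiset β, X = U + V ∧ Y = S + T ∧ Z = U + S ∧ W = V + T := by
  classical
  refine ⟨X ∩ Z, X - Z, Z - X, Y - (Z - X), ?_, ?_, ?_, ?_⟩ <;>
  · ext a
    have hc := congrArg (Multiset.count a) h
    simp only [Multiset.count_add] at hc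
    simp only [Multiset.count_add, Multiset.count_inter, Multiset.count_sub]
    omega

section MultisetExtension

variable {r : β → β → Prop}

lemma dm_mono {M N : Multiset β} (h : M ≤ N) : dm r M ⊆ dm r N :=
  fun _ ⟨a, ha, hxa⟩ => ⟨a, Multiset.mem_of_le h ha, hxa⟩

lemma dm_subset_of_forall_mem_dm [IsTrans β r] {M N : Multiset β} (h : ∀ x ∈ M, x ∈ dm r N) :
    dm r M ⊆ dm r N := by
  rintro x ⟨a, ha, hxa⟩
  obtain ⟨b, hb, hab⟩ := h a ha
  exact ⟨b, hb, trans_of r hxa hab⟩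

lemma mulLe_refl (M : Multiset β) : mulLe r M M :=
  ⟨M, 0, 0, (add_zero M).symm, (add_zero M).symm, by simp⟩

lemma mulLe_of_le {M N : Multiset β} (h : M ≤ N) : mulLe r M N := by
  classical
  exact ⟨M, N - M, 0, (add_zero M).symm, (add_tsub_cancel_of_le h).symm, by simp⟩

lemma mulLe_add {M N M' N' : Multiset β} (h : mulLe r M N) (h' : mulLe r M' N') :
    mulLe r (M + M') (N + N') := by
  obtain ⟨I, J, K, rfl, rfl, hK⟩ := h
  obtain ⟨I', J', K', rfl, rfl, hK'⟩ := h'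
  refine ⟨I + I', J + J', K + K', by abel, by abel, fun k hk => ?_⟩
  rw [dm_add]
  rcases Multiset.mem_add.1 hk with hk | hk
  exacts [Or.inl (hK k hk), Or.inr (hK' k hk)]

lemma mulLe_trans [IsTrans β r] {M N P : Multiset β} (h₁ : mulLe r M N) (h₂ : mulLe r N P) :
    mulLe r M P := by
  obtain ⟨I₁, J₁, K₁, rfl, hN, hK₁⟩ := h₁
  obtain ⟨I₂, J₂, K₂, hN', rfl, hK₂⟩ := h₂
  obtain ⟨U, V, S, T, rfl, rfl, rfl, rfl⟩ :=
    Multiset.exists_refinement_of_add_eq_add (hN.symm.trans hN')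
  have hT : dm r T ⊆ dm r J₂ :=
    dm_subset_of_forall_mem_dm fun t ht => hK₂ t (Multiset.mem_add.2 (Or.inr ht))
  refine ⟨U, S + J₂, V + K₁, by abel, by abel, fun k hk => ?_⟩
  rw [dm_add]
  rcases Multiset.mem_add.1 hk with hk | hk
  · exact Or.inr (hK₂ k (Multiset.mem_add.2 (Or.inl hk)))
  · have hk₁ := hK₁ k hk
    rw [dm_add] at hk₁
    exact hk₁.imp id (@hT k)

lemma dm_subset_of_mulLe [IsTrans β r] {M N : Multiset β} (h : mulLe r M N) :
    dm r M ⊆ dm r N := by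
  obtain ⟨I, J, K, rfl, rfl, hK⟩ := h
  rw [dm_add, dm_add]
  exact Set.union_subset_union_right _ (dm_subset_of_forall_mem_dm hK)

lemma mulLe_msub {S : Set β} (hS : DownClosed r S) {M N : Multiset β} (h : mulLe r M N) :
    mulLe r (msub M S) (msub N S) := by
  obtain ⟨I, J, K, rfl, rfl, hK⟩ := h
  refine ⟨msub I S, msub J S, msub K S, msub_add _ _ _, msub_add _ _ _, fun k hk => ?_⟩
  obtain ⟨hkK, hkS⟩ := mem_msub.1 hk
  obtain ⟨j, hj, hkj⟩ := hK k hkK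
  exact ⟨j, mem_msub.2 ⟨hj, fun hjS => hkS (hS hkj hjS)⟩, hkj⟩

lemma mulLe_add_of_forall_mem_dm {M N R : Multiset β} (h : mulLe r M N)
    (hR : ∀ x ∈ R, x ∈ dm r N ∧ x ∉ dm r M) : mulLe r (M + R) N := by
  obtain ⟨I, J, K, rfl, rfl, hK⟩ := h
  refine ⟨I, J, K + R, by abel, rfl, fun k hk => ?_⟩
  rcases Multiset.mem_add.1 hk with hk | hk
  · exact hK k hk
  · obtain ⟨hkN, hkM⟩ := hR k hk
    rw [dm_add] at hkN hkM
    exact hkN.resolve_left fun hkI => hkM (Or.inl hkI)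

lemma mulLe_cancel_cons [IsTrans β r] [Std.Irrefl r] {z : β} {M N : Multiset β}
    (h : mulLe r (z ::ₘ M) (z ::ₘ N)) : mulLe r M N := by
  classical
  obtain ⟨I, J, K, hM, hN, hK⟩ := h
  by_cases hzI : z ∈ I
  · refine ⟨I.erase z, J, K, ?_, ?_, hK⟩ <;>
    · refine (Multiset.cons_inj_right z).1 ?_
      rwa [← Multiset.cons_add, Multiset.cons_erase hzI]
  have hzK : z ∈ K := (Multiset.mem_add.1 (hM ▸ Multiset.mem_cons_self z M)).resolve_left hzI
  have hzJ : z ∈ J := (Multiset.mem_add.1 (hN ▸ Multiset.mem_cons_self z N)).resolve_left hzI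
  refine ⟨I, J.erase z, K.erase z, ?_, ?_, fun k hk => ?_⟩
  · refine (Multiset.cons_inj_right z).1 ?_
    rwa [← Multiset.add_cons, Multiset.cons_erase hzK]
  · refine (Multiset.cons_inj_right z).1 ?_
    rwa [← Multiset.add_cons, Multiset.cons_erase hzJ]
  obtain ⟨j, hj, hkj⟩ := hK k (Multiset.mem_of_mem_erase hk)
  by_cases hjz : j = z
  · subst hjz
    obtain ⟨j', hj', hjj'⟩ := hK j hzK
    have hj'j : j' ≠ j := fun he => irrefl_of r j (he ▸ hjj')
    exact ⟨j', (Multiset.mem_erase_of_ne hj'j).2 hj', trans_of r hkj hjj'⟩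
  · exact ⟨j, (Multiset.mem_erase_of_ne hjz).2 hj, hkj⟩

lemma mulLe_cancel_left [IsTrans β r] [Std.Irrefl r] (Z : Multiset β) {M N : Multiset β}
    (h : mulLe r (Z + M) (Z + N)) : mulLe r M N := by
  induction Z using Multiset.induction_on with
  | empty => simpa using h
  | cons z Z ih =>
    rw [Multiset.cons_add, Multiset.cons_add] at h
    exact ih (mulLe_cancel_cons h)

lemma mulLt_add_singleton_of_mulLe {M N R : Multiset β} {a : β} (h : mulLe r M N)
    (hR : ∀ x ∈ R, r x a) : mulLt r (M + R) (N + {a}) := by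
  obtain ⟨I, J, K, rfl, rfl, hK⟩ := h
  refine ⟨I, J + {a}, K + R, by abel, by abel, fun k hk => ?_, by simp⟩
  rw [dm_add, dm_singleton, Set.mem_union, mem_ds_singleton]
  rcases Multiset.mem_add.1 hk with hk | hk
  exacts [Or.inl (hK k hk), Or.inr (hR k hk)]

lemma mulLt_of_mulLt_of_le {M N N' : Multiset β} (h : mulLt r M N) (hN : N ≤ N') :
    mulLt r M N' := by
  classical
  obtain ⟨I, J, K, rfl, rfl, hK, hJ⟩ := h
  refine ⟨I, J + (N' - (I + J)), K, rfl, ?_, fun k hk => dm_mono le_self_add (hK k hk), ?_⟩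
  · rw [← add_assoc, add_tsub_cancel_of_le hN]
  · exact fun h0 => hJ (add_eq_zero.1 h0).1

end MultisetExtension

section WellFounded

variable {r : β → β → Prop}

lemma transGen_cutExpand_add_of_forall_mem_dm (I K J : Multiset β)
    (hK : ∀ k ∈ K, k ∈ dm r J) (hJ : J ≠ 0) : TransGen (CutExpand r) (I + K) (I + J) := by
  classical
  induction J using Multiset.induction_on generalizing I K with
  | empty => exact absurd rfl hJ
  | cons a J ih =>
    obtain ⟨K₁, K₂, rfl, hK₁, hK₂⟩ : ∃ K₁ K₂ : Multiset β,
        K = K₁ + K₂ ∧ (∀ k ∈ K₁, r k a) ∧ ∀ k ∈ K₂, k ∈ dm r J := by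
      refine ⟨K.filter (r · a), K.filter (¬ r · a), (Multiset.filter_add_not _ K).symm,
        fun k hk => (Multiset.mem_filter.1 hk).2, fun k hk => ?_⟩
      obtain ⟨hkK, hka⟩ := Multiset.mem_filter.1 hk
      obtain ⟨j, hj, hkj⟩ := hK k hkK
      rcases Multiset.mem_cons.1 hj with rfl | hj
      exacts [absurd hkj hka, ⟨j, hj, hkj⟩]
    have hstep : CutExpand r (I + K₁ + J) (I + a ::ₘ J) := by
      rw [Multiset.add_cons, ← Multiset.singleton_add, add_comm ({a} : Multiset β),
        add_right_comm I K₁ J]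
      exact (cutExpand_add_left _).2 (cutExpand_singleton hK₁)
    rw [← add_assoc]
    rcases eq_or_ne J 0 with rfl | hJ₀
    · have hK₂0 : K₂ = 0 := Multiset.eq_zero_of_forall_notMem fun k hk => by
        simpa [dm_zero] using hK₂ k hk
      rw [hK₂0, add_zero]
      rw [add_zero] at hstep
      exact .single hstep
    · exact (ih (I + K₁) K₂ hK₂ hJ₀).tail hstep

lemma mulLt_wellFounded (hwf : WellFounded r) : WellFounded (mulLt r) :=
  Subrelation.wf (fun {_ _} ⟨I, J, K, hM, hN, hK, hJ⟩ =>
    hM ▸ hN ▸ transGen_cutExpand_add_of_forall_mem_dm I K J hK hJ) hwf.cutExpand.transGen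

end WellFounded

section Diagrams

variable {r : β → β → Prop}

namespace Decreasing

lemma nil_left (σ : List β) : Decreasing r [] σ σ [] :=
  ⟨by simpa [lexmax] using mulLe_refl _, by simpa [lexmax] using mulLe_refl _⟩

lemma nil_right (τ : List β) : Decreasing r τ [] [] τ :=
  ⟨by simpa [lexmax] using mulLe_refl _, by simpa [lexmax] using mulLe_refl _⟩

lemma symm {τ σ σ' τ' : List β} (h : Decreasing r τ σ σ' τ') : Decreasing r σ τ τ' σ' :=
  ⟨add_comm (lexmax r τ) _ ▸ h.2, add_comm (lexmax r τ) _ ▸ h.1⟩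

end Decreasing

variable [IsTrans β r]

instance : Trans (mulLe r) (mulLe r) (mulLe r) := ⟨mulLe_trans⟩

local infix:50 " ≼ " => mulLe r

lemma dl_subset_of_mulLe {τ σ τ' : List β}
    (h : mulLe r (lexmax r (σ ++ τ')) (lexmax r τ + lexmax r σ)) :
    dl r τ' ⊆ dl r τ ∪ dl r σ :=
  calc dl r τ' ⊆ dl r (σ ++ τ') := dl_append σ τ' ▸ Set.subset_union_right
    _ = dm r (lexmax r (σ ++ τ')) := dl_eq_dm_lexmax _
    _ ⊆ dm r (lexmax r τ + lexmax r σ) := dm_subset_of_mulLe h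
    _ = dl r τ ∪ dl r σ := by rw [dm_add, ← dl_eq_dm_lexmax, ← dl_eq_dm_lexmax]

variable [Std.Irrefl r]

lemma lexmax_add_lexmax_mulLt {a : β} {σ μ : List β} {N : Multiset β}
    (h : mulLe r (lexmax r ([a] ++ μ)) (lexmax r [a] + N)) :
    mulLt r (lexmax r σ + lexmax r μ) (lexmax r (a :: σ) + N) := by
  rw [List.singleton_append, lexmax_cons, lexmax_singleton] at h
  obtain ⟨P, hσ, hP⟩ := exists_eq_msub_add (lexmax r σ) (ds r {a})
  obtain ⟨Q, hμ, hQ⟩ := exists_eq_msub_add (lexmax r μ) (ds r {a})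
  have hPQ : ∀ x ∈ P + Q, r x a := fun x hx =>
    mem_ds_singleton.1 ((Multiset.mem_add.1 hx).elim (hP x) (hQ x))
  have hlt := mulLt_add_singleton_of_mulLe
    (mulLe_add (mulLe_refl (msub (lexmax r σ) (ds r {a}))) (mulLe_cancel_left _ h)) hPQ
  convert hlt using 1
  · rw [add_add_add_comm, ← hσ, ← hμ]
  · rw [lexmax_cons]
    abel

namespace Decreasing

lemma paste_horizontal {τ σ₁ σ₂ σ' σ'' τ' τ'' : List β}
    (h₁ : Decreasing r τ σ₁ σ' τ') (h₂ : Decreasing r τ' σ₂ σ'' τ'') :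
    Decreasing r τ (σ₁ ++ σ₂) (σ' ++ σ'') τ'' := by
  obtain ⟨h₁₁, h₁₂⟩ := h₁
  obtain ⟨h₂₁, h₂₂⟩ := h₂
  have hσ₁ : DownClosed r (dl r σ₁) := downClosed_ds _
  constructor
  · have hmsub := mulLe_msub hσ₁ h₂₁
    rw [msub_add] at hmsub
    rw [lexmax_append] at h₁₁
    calc lexmax r (σ₁ ++ σ₂ ++ τ'')
        = lexmax r σ₁ + msub (lexmax r (σ₂ ++ τ'')) (dl r σ₁) := by
          rw [List.append_assoc, lexmax_append]
      _ ≼ lexmax r σ₁ + (msub (lexmax r τ') (dl r σ₁) + msub (lexmax r σ₂) (dl r σ₁)) :=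
          mulLe_add (mulLe_refl _) hmsub
      _ = lexmax r σ₁ + msub (lexmax r τ') (dl r σ₁) + msub (lexmax r σ₂) (dl r σ₁) :=
          (add_assoc _ _ _).symm
      _ ≼ lexmax r τ + lexmax r σ₁ + msub (lexmax r σ₂) (dl r σ₁) :=
          mulLe_add h₁₁ (mulLe_refl _)
      _ = lexmax r τ + lexmax r (σ₁ ++ σ₂) := by rw [lexmax_append, add_assoc]
  · have hcancel : msub (lexmax r σ'') (dl r τ') ≼ lexmax r σ₂ :=
      mulLe_cancel_left (lexmax r τ') (by rwa [lexmax_append] at h₂₂)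
    have hmsub := mulLe_msub hσ₁ hcancel
    rw [msub_msub] at hmsub
    obtain ⟨R, hsplit, hR⟩ :=
      exists_msub_eq_msub_union_add (lexmax r σ'') (dl r (τ ++ σ')) (dl r τ' ∪ dl r σ₁)
    have habsorb : lexmax r (τ ++ σ') + R ≼ lexmax r τ + lexmax r σ₁ := by
      refine mulLe_add_of_forall_mem_dm h₁₂ fun x hx => ?_
      rw [dm_add, ← dl_eq_dm_lexmax, ← dl_eq_dm_lexmax, ← dl_eq_dm_lexmax]
      obtain ⟨hx₁ | hx₁, hx₂⟩ := hR x hx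
      exacts [⟨dl_subset_of_mulLe h₁₁ hx₁, hx₂⟩, ⟨Or.inr hx₁, hx₂⟩]
    calc lexmax r (τ ++ (σ' ++ σ''))
        = lexmax r (τ ++ σ') + msub (lexmax r σ'') (dl r (τ ++ σ')) := by
          rw [← List.append_assoc, lexmax_append]
      _ = lexmax r (τ ++ σ') + R +
            msub (lexmax r σ'') (dl r (τ ++ σ') ∪ (dl r τ' ∪ dl r σ₁)) := by
          rw [hsplit, add_right_comm, add_assoc]
      _ ≼ lexmax r τ + lexmax r σ₁ + msub (lexmax r σ₂) (dl r σ₁) :=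
          mulLe_add habsorb (mulLe_trans (mulLe_of_le (msub_union_le _ _ _)) hmsub)
      _ = lexmax r τ + lexmax r (σ₁ ++ σ₂) := by rw [lexmax_append, add_assoc]

lemma paste_vertical {τ₁ τ₂ σ σ' σ'' τ' τ'' : List β}
    (h₁ : Decreasing r τ₁ σ σ' τ') (h₂ : Decreasing r τ₂ σ' σ'' τ'') :
    Decreasing r (τ₁ ++ τ₂) σ σ'' (τ' ++ τ'') :=
  (paste_horizontal h₁.symm h₂.symm).symm

end Decreasing

end Diagrams

def DecreasinglyJoinable (B : α → β → α → Prop) (r : β → β → Prop) (b c : α)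
    (τ σ : List β) : Prop :=
  ∃ (d : α) (σ' τ' : List β), LSeq B b σ' d ∧ LSeq B c τ' d ∧ Decreasing r τ σ σ' τ'

section Peaks

variable {B : α → β → α → Prop} {r : β → β → Prop}

lemma LSeq.append {a b c : α} {τ σ : List β} (h₁ : LSeq B a τ b) (h₂ : LSeq B b σ c) :
    LSeq B a (τ ++ σ) c := by
  induction h₁ with
  | nil => exact h₂
  | cons hstep _ ih => exact .cons hstep (ih h₂)

lemma decreasinglyJoinable_of_mulLt [IsTrans β r] [Std.Irrefl r]
    (hlocal : ∀ (a b c : α) (lb lc : β), B a lb b → B a lc c →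
      DecreasinglyJoinable B r b c [lb] [lc])
    {a b c : α} {τ σ : List β}
    (ih : ∀ (a' b' c' : α) (τ' σ' : List β),
      mulLt r (lexmax r τ' + lexmax r σ') (lexmax r τ + lexmax r σ) →
      LSeq B a' τ' b' → LSeq B a' σ' c' → DecreasinglyJoinable B r b' c' τ' σ')
    (hτ : LSeq B a τ b) (hσ : LSeq B a σ c) : DecreasinglyJoinable B r b c τ σ := by
  rcases hτ with _ | @⟨_, b₁, _, l, τ₁, hl, hτ₁⟩
  · exact ⟨c, σ, [], hσ, .nil c, .nil_left σ⟩
  rcases hσ with _ | @⟨_, c₁, _, k, σ₁, hk, hσ₁⟩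
  · exact ⟨b, [], l :: τ₁, .nil b, .cons hl hτ₁, .nil_right _⟩
  obtain ⟨e, κ₁, μ₁, hκ₁, hμ₁, D₁⟩ := hlocal a b₁ c₁ l k hl hk
  have hlt₁ : mulLt r (lexmax r τ₁ + lexmax r κ₁) (lexmax r (l :: τ₁) + lexmax r (k :: σ₁)) :=
    mulLt_of_mulLt_of_le (lexmax_add_lexmax_mulLt D₁.2)
      (add_le_add_right (lexmax_singleton_le_cons k σ₁) _)
  obtain ⟨f, κ₂, μ₂, hκ₂, hμ₂, D₂⟩ := ih b₁ b e τ₁ κ₁ hlt₁ hτ₁ hκ₁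
  have D₁₂ : Decreasing r (l :: τ₁) [k] κ₂ (μ₁ ++ μ₂) := D₁.paste_vertical D₂
  have hlt₂ : mulLt r (lexmax r σ₁ + lexmax r (μ₁ ++ μ₂))
      (lexmax r (l :: τ₁) + lexmax r (k :: σ₁)) :=
    add_comm (lexmax r (k :: σ₁)) _ ▸ lexmax_add_lexmax_mulLt (add_comm (lexmax r _) _ ▸ D₁₂.1)
  obtain ⟨g, κ₃, μ₃, hκ₃, hμ₃, D₃⟩ := ih c₁ c f σ₁ (μ₁ ++ μ₂) hlt₂ hσ₁ (hμ₁.append hμ₂)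
  exact ⟨g, κ₂ ++ μ₃, κ₃, hκ₂.append hμ₃, hκ₃, D₁₂.paste_horizontal D₃.symm⟩

end Peaks

/-- if all local peaks are decreasing then all peaks are decreasing -/
theorem local_peaks_decreasing_imp_peaks_decreasing {α : Type u} {β : Type v}
    (B : α → β → α → Prop) (r : β → β → Prop)
    (htrans : Transitive r) (hwf : WellFounded r)
    (hld : ∀ (a b c : α) (lb lc : β), B a lb b → B a lc c →
      ∃ (d : α) (σ' τ' : List β),
        LSeq B b σ' d ∧ LSeq B c τ' d ∧ Decreasing r [lb] [lc] σ' τ') :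
    ∀ (a b c : α) (τ σ : List β), LSeq B a τ b → LSeq B a σ c →
      ∃ (d : α) (σ' τ' : List β),
        LSeq B b σ' d ∧ LSeq B c τ' d ∧ Decreasing r τ σ σ' τ' := by
  have : IsTrans β r := ⟨@htrans⟩
  have := hwf.irrefl
  suffices ∀ m (a b c : α) (τ σ : List β), lexmax r τ + lexmax r σ = m →
      LSeq B a τ b → LSeq B a σ c → DecreasinglyJoinable B r b c τ σ from
    fun a b c τ σ => this _ a b c τ σ rfl
  intro m
  induction m using (mulLt_wellFounded hwf).induction with
  | _ m ih =>
    rintro a b c τ σ rfl hτ hσ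
    exact decreasinglyJoinable_of_mulLt hld
      (fun a' b' c' τ' σ' hlt => ih _ hlt a' b' c' τ' σ' rfl) hτ hσ
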